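/- Let w_1, …, w_k (k ≥ 3) be an integral sorted edge family, with w_i = n_i·v_i where n_i is a positive integer and v_i ∈ ℤ² has coprime coordinates. Write s_0 = 0 and s_j = w_1 + ⋯ + w_j. Then the set of integer points lying on the topological frontier of the polygon of the family is exactly { s_{j−1} + m·v_j : 1 ≤ j ≤ k, 0 ≤ m ≤ n_j }. -/

import Mathlib

/-- The argument in `[0, 2π)` of a vector of `ℝ²` (junk value for `0`). -/
noncomputable def argIn (u : ℝ × ℝ) : ℝ :=
  if 0 ≤ Complex.arg ⟨u.1, u.2⟩ then Complex.arg ⟨u.1, u.2⟩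
  else Complex.arg ⟨u.1, u.2⟩ + 2 * Real.pi

/-- A sorted edge family: a finite sequence of nonzero vectors of `ℝ²` summing to `0`,
whose arguments in `[0, 2π)` are strictly increasing. -/
def IsSortedEdgeFamily {k : ℕ} (w : Fin k → ℝ × ℝ) : Prop :=
  (∀ i, w i ≠ 0) ∧ (∑ i, w i = 0) ∧
  ∀ i j : Fin k, i < j → argIn (w i) < argIn (w j)

/-- The partial sums `s_j = w_1 + ⋯ + w_j` of an edge family. -/
noncomputable def partialSum {k : ℕ} (w : Fin k → ℝ × ℝ) (j : Fin k) : ℝ × ℝ :=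
  ∑ i ∈ Finset.Iic j, w i

/-! The polygon is the intersection of the half-planes to the left of its edges. Seen from an
edge `w_j`, the following edges first turn left and then right, so every partial sum other than
the two endpoints of `w_j` lies strictly to the left of the line through `w_j`; hence a boundary
point, which lies on one of these lines, lies on an edge. Conversely, a point outside the polygon
is separated from it by a linear functional `f`, and already the two half-planes at a vertex
maximising `f` exclude it. Finally, the integer points of an edge `s_{j-1} + [0, n_j] • v_j` with
`v_j` primitive are the points `s_{j-1} + m • v_j`, by Bézout. -/

open Finset Function

def wedge : (ℝ × ℝ) →ₗ[ℝ] (ℝ × ℝ) →ₗ[ℝ] ℝ :=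
  LinearMap.mk₂ ℝ (fun a b => a.1 * b.2 - a.2 * b.1)
    (fun _ _ _ => by simp only [Prod.fst_add, Prod.snd_add]; ring)
    (fun _ _ _ => by simp only [Prod.smul_fst, Prod.smul_snd, smul_eq_mul]; ring)
    (fun _ _ _ => by simp only [Prod.fst_add, Prod.snd_add]; ring)
    (fun _ _ _ => by simp only [Prod.smul_fst, Prod.smul_snd, smul_eq_mul]; ring)

@[simp]
lemma wedge_apply (a b : ℝ × ℝ) : wedge a b = a.1 * b.2 - a.2 * b.1 := rfl

lemma wedge_self (a : ℝ × ℝ) : wedge a a = 0 := by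
  rw [wedge_apply]; ring

lemma wedge_smul_eq (a b z : ℝ × ℝ) : wedge a b • z = wedge z b • a + wedge a z • b := by
  ext <;> simp only [wedge_apply, Prod.smul_fst, Prod.smul_snd, Prod.fst_add, Prod.snd_add,
    smul_eq_mul] <;> ring

lemma apply_nonpos_of_wedge_nonneg {F : Type*} [FunLike F (ℝ × ℝ) ℝ]
    [LinearMapClass F ℝ (ℝ × ℝ) ℝ] (f : F) {a b z : ℝ × ℝ}
    (hab : 0 < wedge a b) (ha : 0 ≤ f a) (hb : f b ≤ 0) (haz : 0 ≤ wedge a z)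
    (hbz : 0 ≤ wedge b z) : f z ≤ 0 := by
  have key := congrArg f (wedge_smul_eq a b z)
  simp only [map_add, map_smul, smul_eq_mul] at key
  have hzb : wedge z b = -wedge b z := by simp only [wedge_apply]; ring
  rw [hzb] at key
  nlinarith [mul_nonneg hbz ha, mul_nonneg haz (neg_nonneg.2 hb)]

lemma sum_range_pos_of_nonpos_imp_neg {c : ℕ → ℝ} {n : ℕ} (hsum : ∑ t ∈ range n, c t = 0)
    (hsign : ∀ t t', t < t' → t' < n → c t ≤ 0 → c t' < 0) {i : ℕ} (hi : 0 < i)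
    (hin : i < n) : 0 < ∑ t ∈ range i, c t := by
  by_contra! hle
  obtain ⟨t, ht, hct⟩ : ∃ t ∈ range i, c t ≤ 0 := by
    by_contra! hpos
    exact hle.not_gt (sum_pos hpos (nonempty_range_iff.2 hi.ne'))
  have htail : ∑ t' ∈ Ico i n, c t' < 0 := by
    refine sum_neg (fun t' ht' => ?_) (nonempty_Ico.2 hin)
    rw [mem_range] at ht
    rw [mem_Ico] at ht'
    exact hsign t t' (by omega) ht'.2 hct
  have := sum_range_add_sum_Ico c hin.le
  linarith

lemma mem_convexHull_sep_of_apply_eq {E : Type*} [AddCommGroup E] [Module ℝ E] {s : Set E}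
    (ℓ : E →ₗ[ℝ] ℝ) {c : ℝ} (hs : ∀ x ∈ s, c ≤ ℓ x) {y : E} (hy : y ∈ convexHull ℝ s)
    (hℓy : ℓ y = c) : y ∈ convexHull ℝ {x ∈ s | ℓ x = c} := by
  set F := convexHull ℝ {x ∈ s | ℓ x = c}
  have hF : F ⊆ {x | ℓ x = c} :=
    convexHull_min (fun x hx => hx.2) (convex_hyperplane ℓ.isLinear c)
  -- `F ∪ {c < ℓ}` is convex and contains `s`, hence `y`, which is not in its second part.
  have hge : ∀ x ∈ F ∪ {x | c < ℓ x}, c ≤ ℓ x ∧ (x ∉ F → c < ℓ x) := by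
    rintro x (hx | hx)
    · exact ⟨(hF hx).ge, fun h => (h hx).elim⟩
    · exact ⟨hx.le, fun _ => hx⟩
  have hconv : Convex ℝ (F ∪ {x | c < ℓ x}) := by
    refine convex_iff_openSegment_subset.2 fun x hx x' hx' z ⟨a, b, ha, hb, hab, hz⟩ => ?_
    subst hz
    by_cases hxx' : x ∈ F ∧ x' ∈ F
    · exact Or.inl ((convex_convexHull ℝ _) hxx'.1 hxx'.2 ha.le hb.le hab)
    · right
      obtain ⟨hx1, hx2⟩ := hge x hx
      obtain ⟨hx'1, hx'2⟩ := hge x' hx'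
      show c < ℓ (a • x + b • x')
      have hc : c = a * c + b * c := by rw [← add_mul, hab, one_mul]
      rw [map_add, map_smul, map_smul, smul_eq_mul, smul_eq_mul]
      rcases not_and_or.1 hxx' with h | h
      · nlinarith [hx2 h]
      · nlinarith [hx'2 h]
  have hyF := convexHull_min (fun x hx => (lt_or_eq_of_le (hs x hx)).elim Or.inr
    fun h => Or.inl (subset_convexHull ℝ {x ∈ s | ℓ x = c} ⟨hx, h.symm⟩)) hconv hy
  exact hyF.resolve_right hℓy.le.not_gt

lemma interior_setOf_le_apply {E : Type*} [NormedAddCommGroup E] [NormedSpace ℝ E]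
    [FiniteDimensional ℝ E] {ℓ : E →ₗ[ℝ] ℝ} (hℓ : ℓ ≠ 0) (c : ℝ) :
    interior {y | c ≤ ℓ y} = {y | c < ℓ y} := by
  change interior (ℓ ⁻¹' Set.Ici c) = ℓ ⁻¹' Set.Ioi c
  rw [← (ℓ.isOpenMap_of_finiteDimensional (LinearMap.surjective_of_ne_zero hℓ)
    ).preimage_interior_eq_interior_preimage (LinearMap.continuous_of_finiteDimensional ℓ),
    interior_Ici]

-- Seen from `W j`, the edges `W (j + 1), …, W (j + k - 1)` first point to its left and then,
-- after at most one antiparallel edge, strictly to its right.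
structure IsConvexEdgeCycle (k : ℕ) (W : ℕ → ℝ × ℝ) : Prop where
  three_le : 3 ≤ k
  periodic : Periodic W k
  sum_range_eq_zero : ∑ t ∈ range k, W t = 0
  wedge_neg_of_wedge_nonpos : ∀ j t t', 0 < t → t < t' → t' < k →
    wedge (W j) (W (j + t)) ≤ 0 → wedge (W j) (W (j + t')) < 0

def vertex (W : ℕ → ℝ × ℝ) (n : ℕ) : ℝ × ℝ := ∑ t ∈ range n, W t

lemma vertex_succ (W : ℕ → ℝ × ℝ) (n : ℕ) : vertex W (n + 1) = vertex W n + W n :=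
  sum_range_succ W n

lemma wedge_vertex_sub {W : ℕ → ℝ × ℝ} (j i : ℕ) :
    wedge (W j) (vertex W (j + 1 + i) - vertex W j) =
      ∑ t ∈ range i, wedge (W j) (W (j + 1 + t)) := by
  rw [vertex, vertex, add_assoc, sum_range_add, add_sub_cancel_left, map_sum, add_comm 1,
    sum_range_succ', add_zero, wedge_self, add_zero]
  simp only [add_comm 1, add_assoc]

namespace IsConvexEdgeCycle

variable {k : ℕ} {W : ℕ → ℝ × ℝ} (h : IsConvexEdgeCycle k W)
include h

lemma vertex_periodic : Periodic (vertex W) k := by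
  intro n
  induction n with
  | zero => simpa [vertex] using h.sum_range_eq_zero
  | succ n ih => rw [Nat.add_right_comm, vertex_succ, vertex_succ, ih, h.periodic n]

lemma vertex_eq_of_modEq {m m' : ℕ} (hm : m ≡ m' [MOD k]) : vertex W m = vertex W m' := by
  rw [← h.vertex_periodic.map_mod_nat, hm, h.vertex_periodic.map_mod_nat]

lemma exists_vertex_eq (j m : ℕ) : ∃ i < k, vertex W m = vertex W (j + 1 + i) := by
  obtain ⟨k', rfl⟩ : ∃ k', k = k' + 1 := ⟨k - 1, by have := h.three_le; omega⟩
  refine ⟨(m + k' * (j + 1)) % (k' + 1), Nat.mod_lt _ k'.succ_pos, h.vertex_eq_of_modEq ?_⟩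
  calc m ≡ m + (k' + 1) * (j + 1) [MOD k' + 1] := (Nat.add_mul_mod_self_left _ _ _).symm
    _ = j + 1 + (m + k' * (j + 1)) := by ring
    _ ≡ j + 1 + (m + k' * (j + 1)) % (k' + 1) [MOD k' + 1] :=
      Nat.ModEq.add_left _ (Nat.mod_modEq _ _).symm

lemma wedge_vertex_sub_pos {j i : ℕ} (hi : 0 < i) (hik : i < k - 1) :
    0 < wedge (W j) (vertex W (j + 1 + i) - vertex W j) := by
  rw [wedge_vertex_sub]
  refine sum_range_pos_of_nonpos_imp_neg ?_ (fun t t' htt' ht' hle => ?_) hi hik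
  · rw [← wedge_vertex_sub, show j + 1 + (k - 1) = j + k by have := h.three_le; omega,
      h.vertex_periodic, sub_self, map_zero]
  · simpa only [add_assoc, add_comm 1] using
      h.wedge_neg_of_wedge_nonpos j (1 + t) (1 + t') (by omega) (by omega) (by omega)
        (by simpa only [add_assoc] using hle)

lemma wedge_pos_succ (j : ℕ) : 0 < wedge (W j) (W (j + 1)) := by
  have := h.wedge_vertex_sub_pos (j := j) one_pos (by have := h.three_le; omega)
  rwa [wedge_vertex_sub, sum_range_one, add_zero] at this

lemma wedge_ne_zero (j : ℕ) : wedge (W j) ≠ 0 := fun h0 =>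
  (h.wedge_pos_succ j).ne' (by rw [h0, LinearMap.zero_apply])

lemma vertex_eq_or_wedge_lt (j m : ℕ) :
    vertex W m = vertex W j ∨ vertex W m = vertex W (j + 1) ∨
      wedge (W j) (vertex W j) < wedge (W j) (vertex W m) := by
  obtain ⟨i, hik, hm⟩ := h.exists_vertex_eq j m
  rw [hm]
  rcases Nat.lt_or_ge 0 i with hi | hi
  · rcases Nat.lt_or_ge i (k - 1) with hik' | hik'
    · have := h.wedge_vertex_sub_pos (j := j) hi hik'
      rw [map_sub, sub_pos] at this
      exact Or.inr (Or.inr this)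
    · rw [show j + 1 + i = j + k by omega, h.vertex_periodic]
      exact Or.inl rfl
  · rw [show j + 1 + i = j + 1 by omega]
    exact Or.inr (Or.inl rfl)

lemma wedge_vertex_le (j m : ℕ) : wedge (W j) (vertex W j) ≤ wedge (W j) (vertex W m) := by
  rcases h.vertex_eq_or_wedge_lt j m with hm | hm | hm
  · rw [hm]
  · rw [hm, vertex_succ, map_add, wedge_self, add_zero]
  · exact hm.le

lemma vertex_eq_of_wedge_eq {j m : ℕ}
    (heq : wedge (W j) (vertex W m) = wedge (W j) (vertex W j)) :
    vertex W m = vertex W j ∨ vertex W m = vertex W (j + 1) :=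
  (h.vertex_eq_or_wedge_lt j m).imp_right (Or.resolve_right · heq.not_gt)

lemma exists_vertex_max (f : ℝ × ℝ → ℝ) : ∃ a, ∀ m, f (vertex W m) ≤ f (vertex W (a + 1)) := by
  have hk : 0 < k := by have := h.three_le; omega
  obtain ⟨a, -, ha⟩ := exists_max_image (range k) (f ∘ vertex W) (nonempty_range_iff.2 hk.ne')
  refine ⟨a + k - 1, fun m => ?_⟩
  rw [show a + k - 1 + 1 = a + k by omega, h.vertex_periodic, ← h.vertex_periodic.map_mod_nat m]
  exact ha _ (mem_range.2 (Nat.mod_lt m hk))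

lemma finite_range_vertex : (Set.range (vertex W)).Finite := by
  refine ((Set.finite_Iio k).image (vertex W)).subset ?_
  rintro _ ⟨m, rfl⟩
  exact ⟨m % k, Nat.mod_lt m (by have := h.three_le; omega), h.vertex_periodic.map_mod_nat m⟩

lemma isClosed_convexHull : IsClosed (convexHull ℝ (Set.range (vertex W))) :=
  (h.finite_range_vertex.isCompact_convexHull ℝ).isClosed

lemma convexHull_subset_halfPlane (j : ℕ) :
    convexHull ℝ (Set.range (vertex W)) ⊆ {y | wedge (W j) (vertex W j) ≤ wedge (W j) y} :=
  convexHull_min (Set.range_subset_iff.2 (h.wedge_vertex_le j))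
    (convex_halfSpace_ge (wedge (W j)).isLinear _)

lemma mem_segment_of_wedge_eq {j : ℕ} {y : ℝ × ℝ} (hy : y ∈ convexHull ℝ (Set.range (vertex W)))
    (heq : wedge (W j) y = wedge (W j) (vertex W j)) :
    y ∈ segment ℝ (vertex W j) (vertex W (j + 1)) := by
  rw [← convexHull_pair]
  refine convexHull_mono ?_ (mem_convexHull_sep_of_apply_eq (wedge (W j))
    (Set.forall_mem_range.2 (h.wedge_vertex_le j)) hy heq)
  rintro _ ⟨⟨m, rfl⟩, hm⟩
  exact h.vertex_eq_of_wedge_eq hm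

lemma iInter_halfPlane_subset_convexHull :
    ⋂ j, {y | wedge (W j) (vertex W j) ≤ wedge (W j) y} ⊆ convexHull ℝ (Set.range (vertex W)) := by
  intro y hy
  by_contra hyP
  obtain ⟨f, u, hfP, hfy⟩ :=
    geometric_hahn_banach_closed_point (convex_convexHull ℝ _) h.isClosed_convexHull hyP
  obtain ⟨a, ha⟩ := h.exists_vertex_max f
  have hy := Set.mem_iInter.1 hy
  -- `y` lies in the cone cut out at the vertex `a + 1` by the half-planes of its two edges,
  -- and `f` is maximal at the apex of that cone.
  have hfy_le : f (y - vertex W (a + 1)) ≤ 0 := by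
    refine apply_nonpos_of_wedge_nonneg f (h.wedge_pos_succ a) ?_ ?_ ?_ ?_
    · have := ha a
      rw [vertex_succ, map_add] at this
      linarith
    · have := ha (a + 1 + 1)
      rw [vertex_succ, map_add] at this
      linarith
    · have := hy a
      rw [vertex_succ, map_sub, map_add, wedge_self]
      simp only [Set.mem_ofPred_eq] at this
      linarith
    · have := hy (a + 1)
      rw [map_sub]
      simp only [Set.mem_ofPred_eq] at this
      linarith
  rw [map_sub] at hfy_le
  linarith [hfP _ (subset_convexHull ℝ _ (Set.mem_range_self (a + 1)))]

lemma subset_interior_convexHull :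
    {y | ∀ j < k, wedge (W j) (vertex W j) < wedge (W j) y} ⊆
      interior (convexHull ℝ (Set.range (vertex W))) := by
  refine interior_maximal (fun y hy => h.iInter_halfPlane_subset_convexHull ?_) ?_
  · refine Set.mem_iInter.2 fun j => ?_
    have := hy (j % k) (Nat.mod_lt j (by have := h.three_le; omega))
    rw [h.periodic.map_mod_nat, h.vertex_periodic.map_mod_nat] at this
    exact this.le
  · have : {y | ∀ j < k, wedge (W j) (vertex W j) < wedge (W j) y} =
        ⋂ j ∈ Set.Iio k, {y | wedge (W j) (vertex W j) < wedge (W j) y} := by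
      ext; simp
    rw [this]
    exact (Set.finite_Iio k).isOpen_biInter fun j _ =>
      isOpen_lt continuous_const (LinearMap.continuous_of_finiteDimensional _)

theorem frontier_convexHull :
    frontier (convexHull ℝ (Set.range (vertex W))) =
      ⋃ j : Fin k, segment ℝ (vertex W j) (vertex W (j + 1)) := by
  ext x
  rw [h.isClosed_convexHull.frontier_eq, Set.mem_sdiff, Set.mem_iUnion]
  constructor
  · rintro ⟨hxP, hxi⟩
    obtain ⟨j, hj, heq⟩ : ∃ j < k, wedge (W j) x = wedge (W j) (vertex W j) := by
      by_contra! hne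
      exact hxi (h.subset_interior_convexHull fun j hj =>
        (h.convexHull_subset_halfPlane j hxP).lt_of_ne (hne j hj).symm)
    exact ⟨⟨j, hj⟩, h.mem_segment_of_wedge_eq hxP heq⟩
  · rintro ⟨j, hx⟩
    have hsub : segment ℝ (vertex W j) (vertex W (j + 1)) ⊆ convexHull ℝ (Set.range (vertex W)) :=
      segment_subset_convexHull (Set.mem_range_self _) (Set.mem_range_self _)
    have hline : segment ℝ (vertex W j) (vertex W (j + 1)) ⊆
        {y | wedge (W j) y = wedge (W j) (vertex W j)} :=
      (convex_hyperplane (wedge (W j)).isLinear _).segment_subset rfl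
        (by rw [Set.mem_ofPred_eq, vertex_succ, map_add, wedge_self, add_zero])
    refine ⟨hsub hx, fun hxi => ?_⟩
    have := interior_mono (h.convexHull_subset_halfPlane j) hxi
    rw [interior_setOf_le_apply (h.wedge_ne_zero j)] at this
    exact ne_of_gt this (hline hx)

end IsConvexEdgeCycle

open Real

lemma exists_pos_smul_cos_sin_argIn {u : ℝ × ℝ} (hu : u ≠ 0) :
    ∃ r : ℝ, 0 < r ∧ u = r • (cos (argIn u), sin (argIn u)) := by
  set z : ℂ := ⟨u.1, u.2⟩
  have hz : z ≠ 0 := fun h0 => hu (Prod.ext (congrArg Complex.re h0) (congrArg Complex.im h0))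
  have hcos : cos (argIn u) = cos z.arg := by
    unfold argIn; split_ifs <;> simp only [z, cos_add_two_pi]
  have hsin : sin (argIn u) = sin z.arg := by
    unfold argIn; split_ifs <;> simp only [z, sin_add_two_pi]
  refine ⟨‖z‖, norm_pos_iff.2 hz, Prod.ext ?_ ?_⟩
  · rw [Prod.smul_fst, smul_eq_mul, hcos, Complex.norm_mul_cos_arg]
  · rw [Prod.smul_snd, smul_eq_mul, hsin, Complex.norm_mul_sin_arg]

lemma wedge_smul_cos_sin (r s α β : ℝ) :
    wedge (r • (cos α, sin α)) (s • (cos β, sin β)) = r * s * sin (β - α) := by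
  simp only [wedge_apply, Prod.smul_fst, Prod.smul_snd, smul_eq_mul, sin_sub]
  ring

lemma sin_neg_of_sin_nonpos {x y : ℝ} (hx : 0 < x) (hxy : x < y) (hy : y < 2 * π)
    (hsin : sin x ≤ 0) : sin y < 0 := by
  have hπx : π ≤ x := not_lt.1 fun h => (sin_pos_of_pos_of_lt_pi hx h).not_ge hsin
  have := sin_pos_of_pos_of_lt_pi (x := y - π) (by linarith) (by linarith)
  rwa [sin_sub_pi, neg_pos] at this

lemma argIn_lt_two_pi (u : ℝ × ℝ) : argIn u < 2 * π := by
  unfold argIn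
  split_ifs with h
  · linarith [Complex.arg_le_pi (⟨u.1, u.2⟩ : ℂ), pi_pos]
  · linarith

lemma argIn_nonneg (u : ℝ × ℝ) : 0 ≤ argIn u := by
  unfold argIn
  split_ifs with h
  · exact h
  · linarith [Complex.neg_pi_lt_arg (⟨u.1, u.2⟩ : ℂ)]

section SortedEdgeFamily

open scoped Fin.NatCast

variable {k : ℕ} [NeZero k] {w : Fin k → ℝ × ℝ}

noncomputable def liftedArg (w : Fin k → ℝ × ℝ) (t : ℕ) : ℝ :=
  argIn (w (t : Fin k)) + (t / k : ℕ) * (2 * π)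

lemma liftedArg_add_period (t : ℕ) : liftedArg w (t + k) = liftedArg w t + 2 * π := by
  have hcast : ((t + k : ℕ) : Fin k) = t := by simp
  rw [liftedArg, liftedArg, hcast, Nat.add_div_right t (Nat.pos_of_neZero k)]
  push_cast
  ring

lemma strictMono_liftedArg (hmono : ∀ i j : Fin k, i < j → argIn (w i) < argIn (w j)) :
    StrictMono (liftedArg w) := by
  intro t t' htt'
  rcases (Nat.div_le_div_right (c := k) htt'.le).lt_or_eq with hq | hq
  · have hq' : ((t / k : ℕ) : ℝ) + 1 ≤ (t' / k : ℕ) := by exact_mod_cast hq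
    have := argIn_lt_two_pi (w (t : Fin k))
    have := argIn_nonneg (w (t' : Fin k))
    unfold liftedArg
    nlinarith [pi_pos]
  · have hlt : (t : Fin k) < t' := by
      rw [Fin.lt_def, Fin.val_natCast, Fin.val_natCast]
      have := Nat.div_add_mod t k
      have := Nat.div_add_mod t' k
      rw [hq] at *
      omega
    simp only [liftedArg, hq]
    linarith [hmono _ _ hlt]

lemma exists_pos_smul_cos_sin_liftedArg (hw0 : ∀ i, w i ≠ 0) (t : ℕ) :
    ∃ r : ℝ, 0 < r ∧ w (t : Fin k) = r • (cos (liftedArg w t), sin (liftedArg w t)) := by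
  obtain ⟨r, hr, hrw⟩ := exists_pos_smul_cos_sin_argIn (hw0 (t : Fin k))
  refine ⟨r, hr, ?_⟩
  rw [liftedArg, cos_add_nat_mul_two_pi, sin_add_nat_mul_two_pi]
  exact hrw

theorem IsSortedEdgeFamily.isConvexEdgeCycle (hk : 3 ≤ k) (h : IsSortedEdgeFamily w) :
    IsConvexEdgeCycle k (fun t : ℕ => w (t : Fin k)) := by
  obtain ⟨hw0, hsum, hmono⟩ := h
  refine ⟨hk, fun t => by simp, ?_, fun j t t' ht htt' ht'k hle => ?_⟩
  · rw [← Fin.sum_univ_eq_sum_range (fun t : ℕ => w (t : Fin k)) k]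
    simpa using hsum
  have hΦ := strictMono_liftedArg hmono
  have hper := liftedArg_add_period (w := w) j
  have hΦt := hΦ (show j < j + t by omega)
  have hΦt' := hΦ (show j + t < j + t' by omega)
  have hΦk := hΦ (show j + t' < j + k by omega)
  obtain ⟨r, hr, hrw⟩ := exists_pos_smul_cos_sin_liftedArg hw0 j
  obtain ⟨s, hs, hsw⟩ := exists_pos_smul_cos_sin_liftedArg hw0 (j + t)
  obtain ⟨s', hs', hsw'⟩ := exists_pos_smul_cos_sin_liftedArg hw0 (j + t')
  rw [hrw, hsw, wedge_smul_cos_sin] at hle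
  rw [hrw, hsw', wedge_smul_cos_sin]
  refine mul_neg_of_pos_of_neg (by positivity)
    (sin_neg_of_sin_nonpos (x := liftedArg w (j + t) - liftedArg w j) ?_ ?_ ?_ ?_)
  · linarith
  · linarith
  · linarith
  · exact nonpos_of_mul_nonpos_right hle (by positivity)

lemma vertex_val_eq_sum_Iio (j : Fin k) :
    vertex (fun t : ℕ => w (t : Fin k)) j = ∑ t ∈ Iio j, w t := by
  rw [vertex, ← Nat.Iio_eq_range, ← Fin.map_valEmbedding_Iio, sum_map]
  simp only [Fin.valEmbedding_apply, Fin.cast_val_eq_self]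

lemma partialSum_eq_vertex (i : Fin k) :
    partialSum w i = vertex (fun t : ℕ => w (t : Fin k)) (i + 1) := by
  rw [vertex_succ, vertex_val_eq_sum_Iio, Fin.cast_val_eq_self, partialSum, ← Iio_insert,
    sum_insert notMem_Iio_self, add_comm]

lemma IsSortedEdgeFamily.range_partialSum (hk : 3 ≤ k) (h : IsSortedEdgeFamily w) :
    Set.range (partialSum w) = Set.range (vertex (fun t : ℕ => w (t : Fin k))) := by
  ext x
  constructor
  · rintro ⟨i, rfl⟩
    exact ⟨i + 1, (partialSum_eq_vertex i).symm⟩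
  · rintro ⟨m, rfl⟩
    obtain ⟨i, hi, hm⟩ := (h.isConvexEdgeCycle hk).exists_vertex_eq 0 m
    exact ⟨⟨i, hi⟩, by rw [partialSum_eq_vertex, hm, zero_add, add_comm]⟩

end SortedEdgeFamily

theorem IsSortedEdgeFamily.frontier_convexHull {k : ℕ} {w : Fin k → ℝ × ℝ} (hk : 3 ≤ k)
    (h : IsSortedEdgeFamily w) :
    frontier (convexHull ℝ (Set.range (partialSum w))) =
      ⋃ j, segment ℝ (∑ t ∈ Iio j, w t) (∑ t ∈ Iio j, w t + w j) := by
  have : NeZero k := ⟨by omega⟩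
  rw [h.range_partialSum hk, (h.isConvexEdgeCycle hk).frontier_convexHull]
  simp only [vertex_succ, vertex_val_eq_sum_Iio, Fin.cast_val_eq_self]

def latticePoint : ℤ × ℤ →+ ℝ × ℝ := (Int.castAddHom ℝ).prodMap (Int.castAddHom ℝ)

@[simp]
lemma latticePoint_apply (p : ℤ × ℤ) : latticePoint p = ((p.1 : ℝ), (p.2 : ℝ)) := rfl

lemma latticePoint_add_nsmul (p v : ℤ × ℤ) (m : ℕ) :
    latticePoint (p + m • v) = latticePoint p + (m : ℝ) • latticePoint v := by
  rw [map_add, map_nsmul, Nat.cast_smul_eq_nsmul]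

lemma add_smul_mem_segment {E : Type*} [AddCommGroup E] [Module ℝ E] (a u : E) {s t : ℝ}
    (hs : 0 ≤ s) (hst : s ≤ t) : a + s • u ∈ segment ℝ a (a + t • u) := by
  rcases (hs.trans hst).eq_or_lt with ht | ht
  · obtain rfl : s = 0 := le_antisymm (ht ▸ hst) hs
    simpa using left_mem_segment ℝ a (a + t • u)
  · have := (convex_segment a (a + t • u)).add_smul_mem (left_mem_segment ℝ _ _)
      (right_mem_segment ℝ _ _) ⟨div_nonneg hs ht.le, div_le_one_of_le₀ hst ht.le⟩
    rwa [smul_smul, div_mul_cancel₀ _ ht.ne'] at this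

lemma exists_eq_add_nsmul_of_mem_segment {p v x : ℤ × ℤ} (hv : Int.gcd v.1 v.2 = 1) {n : ℕ}
    (hx : latticePoint x ∈
      segment ℝ (latticePoint p) (latticePoint p + (n : ℝ) • latticePoint v)) :
    ∃ m ≤ n, x = p + m • v := by
  rw [segment_eq_image'] at hx
  obtain ⟨θ, ⟨hθ0, hθ1⟩, hθ⟩ := hx
  simp only [add_sub_cancel_left, smul_smul] at hθ
  obtain ⟨c, d, hcd⟩ := Int.isCoprime_iff_gcd_eq_one.2 hv
  have h1 : (x.1 : ℝ) = p.1 + θ * n * v.1 := by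
    simpa using (congrArg Prod.fst hθ).symm
  have h2 : (x.2 : ℝ) = p.2 + θ * n * v.2 := by
    simpa using (congrArg Prod.snd hθ).symm
  -- Bézout turns the real parameter `θ * n` into an integer.
  set M := c * (x.1 - p.1) + d * (x.2 - p.2)
  have hM : (M : ℝ) = θ * n := by
    have hcd' : (c : ℝ) * v.1 + d * v.2 = 1 := by exact_mod_cast hcd
    push_cast [M]
    linear_combination c * h1 + d * h2 + θ * n * hcd'
  have hM0 : 0 ≤ M := by exact_mod_cast hM ▸ mul_nonneg hθ0 n.cast_nonneg
  have hMn : M ≤ n := by exact_mod_cast hM ▸ mul_le_of_le_one_left n.cast_nonneg hθ1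
  have hxM : x = p + M • v := by
    refine Prod.ext (Int.cast_injective (α := ℝ) ?_) (Int.cast_injective (α := ℝ) ?_) <;>
      simp only [Prod.fst_add, Prod.snd_add, Prod.smul_fst, Prod.smul_snd, smul_eq_mul,
        Int.cast_add, Int.cast_mul, hM] <;>
      linarith
  refine ⟨M.toNat, by omega, ?_⟩
  rw [hxM, ← natCast_zsmul, Int.toNat_of_nonneg hM0]

theorem frontier_integer_points_general {k : ℕ} (hk : 3 ≤ k)
    (n : Fin k → ℕ) (v : Fin k → ℤ × ℤ)
    (hv : ∀ i, Int.gcd (v i).1 (v i).2 = 1)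
    (w : Fin k → ℝ × ℝ)
    (hw : ∀ i, w i = (n i : ℝ) • (((v i).1 : ℝ), ((v i).2 : ℝ)))
    (hsef : IsSortedEdgeFamily w) :
    {x : ℝ × ℝ | x ∈ frontier (convexHull ℝ (Set.range (partialSum w))) ∧
        ∃ a b : ℤ, x = ((a : ℝ), (b : ℝ))} =
    {x : ℝ × ℝ | ∃ j : Fin k, ∃ m : ℕ, m ≤ n j ∧
        x = (∑ i ∈ Finset.Iio j, w i) + (m : ℝ) • (((v j).1 : ℝ), ((v j).2 : ℝ))} := by
  have hstart : ∀ j, ∑ i ∈ Iio j, w i = latticePoint (∑ i ∈ Iio j, n i • v i) := fun j => by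
    simp only [map_sum, map_nsmul, hw, Nat.cast_smul_eq_nsmul, latticePoint_apply]
  rw [hsef.frontier_convexHull hk]
  ext x
  simp only [Set.mem_iUnion, Set.mem_ofPred_eq]
  constructor
  · rintro ⟨⟨j, hj⟩, a, b, rfl⟩
    rw [hstart, hw j] at hj
    obtain ⟨m, hm, hab⟩ := exists_eq_add_nsmul_of_mem_segment (x := (a, b)) (hv j) hj
    refine ⟨j, m, hm, ?_⟩
    rw [hstart]
    exact (congrArg latticePoint hab).trans (latticePoint_add_nsmul ..)
  · rintro ⟨j, m, hm, rfl⟩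
    refine ⟨⟨j, ?_⟩, ?_⟩
    · rw [hw j]
      exact add_smul_mem_segment _ _ m.cast_nonneg (by exact_mod_cast hm)
    · rw [hstart]
      exact ⟨_, _, (latticePoint_add_nsmul _ (v j) m).symm⟩

/-- For an integral sorted edge family `w_i = n_i • v_i` (with `n_i` a positive integer
and `v_i ∈ ℤ²` with coprime coordinates, `k ≥ 3`), the integer points on the frontier of
the polygon of the family are exactly the points `s_{j-1} + m • v_j` with `1 ≤ j ≤ k`
and `0 ≤ m ≤ n_j`. -/
theorem frontier_integer_points {k : ℕ} (hk : 3 ≤ k)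
    (n : Fin k → ℕ) (v : Fin k → ℤ × ℤ)
    (hn : ∀ i, 0 < n i) (hv : ∀ i, Int.gcd (v i).1 (v i).2 = 1)
    (w : Fin k → ℝ × ℝ)
    (hw : ∀ i, w i = (n i : ℝ) • (((v i).1 : ℝ), ((v i).2 : ℝ)))
    (hsef : IsSortedEdgeFamily w) :
    {x : ℝ × ℝ | x ∈ frontier (convexHull ℝ (Set.range (partialSum w))) ∧
        ∃ a b : ℤ, x = ((a : ℝ), (b : ℝ))} =
    {x : ℝ × ℝ | ∃ j : Fin k, ∃ m : ℕ, m ≤ n j ∧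
        x = (∑ i ∈ Finset.Iio j, w i) + (m : ℝ) • (((v j).1 : ℝ), ((v j).2 : ℝ))} :=
  frontier_integer_points_general hk n v hv w hw hsef
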